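/- Let (𝔤, ω) be a symplectic Lie algebra, with q(x) := ω(x,·), r := q⁻¹, product xy on 𝔤 defined by ω(xy,z) = -ω(y,[x,z]), left symmetric product on 𝔤* given by αβ := ad*_{r(α)}β, dual Lie bracket [α,β]_q := q([r(α),r(β)]), and coadjoint action of (𝔤*,[·,·]_q) on 𝔤 defined by ⟨β, ad*_α x⟩ := -⟨[α,β]_q, x⟩. Then the product on 𝒟 := 𝔤 × 𝔤* defined by (x,α)(y,β) := (xy + ad*_α y, αβ + ad*_x β) is left symmetric, and its commutator equals the double Lie bracket [(x,α),(y,β)] = ([x,y] + ad*_α y - ad*_β x, [α,β]_q + ad*_x β - ad*_y α). -/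

import Mathlib

/-! The product `xy` of a symplectic Lie algebra is left symmetric: its commutator is the
bracket (closedness of `ω`), and `x ↦ (y ↦ xy)` is a representation (the Jacobi identity,
moved across `ω`). Both coadjoint actions are expressed through this product: with
`s(x, α) := x + r α` one has `(x, α)(y, β) = (s y, q (s (r β)))` for `s = s(x, α)`, and `s` is
multiplicative. So the associators on `𝒟` are those of `𝔤` at `(s u, s v)`, and left symmetry
is inherited. -/

/-- The coadjoint action of `x : L` on the dual: `⟨coad x α, y⟩ = -⟨α, [x,y]⟩`. -/
noncomputable def coad {L : Type*} [LieRing L] [LieAlgebra ℝ L]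
    (x : L) (α : Module.Dual ℝ L) : Module.Dual ℝ L :=
  -(α ∘ₗ (LieAlgebra.ad ℝ L x))

/-- The product `(x,α)(y,β) = (xy + ad*_α y, αβ + ad*_x β)` on `𝒟 = 𝔤 × 𝔤*`, where
`αβ := ad*_{r α} β` and `cstar` is the coadjoint action of `𝔤*` on `𝔤`. -/
noncomputable def dprod {L : Type*} [LieRing L] [LieAlgebra ℝ L]
    (p : L →ₗ[ℝ] L →ₗ[ℝ] L) (r : Module.Dual ℝ L →ₗ[ℝ] L)
    (cstar : Module.Dual ℝ L → L → L)
    (u v : L × Module.Dual ℝ L) : L × Module.Dual ℝ L :=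
  (p u.1 v.1 + cstar u.2 v.1, coad (r u.2) v.2 + coad u.1 v.2)

section LeftSymmetric

variable {V : Type*} [AddCommGroup V]

def mulAssociator (m : V → V → V) (x y z : V) : V := m (m x y) z - m x (m y z)

def IsLeftSymmetric (m : V → V → V) : Prop :=
  ∀ x y z, mulAssociator m x y z = mulAssociator m y x z

theorem isLeftSymmetric_of_sub_swap_eq_lie {R L : Type*} [CommRing R] [LieRing L]
    [LieAlgebra R L] (p : L →ₗ[R] L →ₗ[R] L) (hcomm : ∀ x y, p x y - p y x = ⁅x, y⁆)
    (hrep : ∀ x y z, p ⁅x, y⁆ z = p x (p y z) - p y (p x z)) :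
    IsLeftSymmetric (p · ·) := by
  intro x y z
  have hswap : p (p x y) z - p (p y x) z = p ⁅x, y⁆ z := by
    rw [← LinearMap.sub_apply, ← map_sub, hcomm]
  rw [sub_eq_iff_eq_add] at hswap
  rw [mulAssociator, mulAssociator, hswap, hrep]
  abel

end LeftSymmetric

section SymplecticProduct

variable {R L : Type*} [CommRing R] [LieRing L] [LieAlgebra R L]
  {ω : L →ₗ[R] Module.Dual R L} {p : L →ₗ[R] L →ₗ[R] L}

theorem symplectic_lie_apply (hskew : ∀ x y : L, ω x y = - ω y x)
    (hclosed : ∀ x y z : L, ω ⁅x, y⁆ z + ω ⁅y, z⁆ x + ω ⁅z, x⁆ y = 0) (x y z : L) :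
    ω ⁅x, y⁆ z = ω x ⁅y, z⁆ - ω y ⁅x, z⁆ := by
  have hyz : ω ⁅y, z⁆ x = - ω x ⁅y, z⁆ := hskew _ _
  have hzx : ω ⁅z, x⁆ y = ω y ⁅x, z⁆ := by
    rw [hskew, ← lie_skew x z, map_neg]
  linear_combination hclosed x y z - hyz - hzx

theorem symplecticProduct_sub_swap (hω : Function.Injective ω)
    (hskew : ∀ x y : L, ω x y = - ω y x)
    (hclosed : ∀ x y z : L, ω ⁅x, y⁆ z + ω ⁅y, z⁆ x + ω ⁅z, x⁆ y = 0)
    (hp : ∀ x y z : L, ω (p x y) z = -(ω y ⁅x, z⁆)) (x y : L) :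
    p x y - p y x = ⁅x, y⁆ := by
  refine hω (LinearMap.ext fun w => ?_)
  rw [map_sub, LinearMap.sub_apply, hp, hp, symplectic_lie_apply hskew hclosed]
  ring

theorem symplecticProduct_lie_apply (hω : Function.Injective ω)
    (hp : ∀ x y z : L, ω (p x y) z = -(ω y ⁅x, z⁆)) (x y z : L) :
    p ⁅x, y⁆ z = p x (p y z) - p y (p x z) := by
  refine hω (LinearMap.ext fun w => ?_)
  rw [map_sub, LinearMap.sub_apply, hp, hp, hp, hp, hp, lie_lie, map_sub]
  ring

end SymplecticProduct

section DoubleProduct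

variable {L : Type*} [LieRing L] [LieAlgebra ℝ L] {ω : L →ₗ[ℝ] Module.Dual ℝ L}
  {r : Module.Dual ℝ L →ₗ[ℝ] L} {p : L →ₗ[ℝ] L →ₗ[ℝ] L} {cstar : Module.Dual ℝ L → L → L}

theorem coad_eq (hr1 : ∀ α : Module.Dual ℝ L, ω (r α) = α)
    (hp : ∀ x y z : L, ω (p x y) z = -(ω y ⁅x, z⁆)) (x : L) (β : Module.Dual ℝ L) :
    coad x β = ω (p x (r β)) := by
  ext z
  simp only [coad, LinearMap.neg_apply, LinearMap.comp_apply, LieAlgebra.ad_apply, hp, hr1]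

theorem cstar_eq (hskew : ∀ x y : L, ω x y = - ω y x) (hr2 : ∀ x : L, r (ω x) = x)
    (hp : ∀ x y z : L, ω (p x y) z = -(ω y ⁅x, z⁆))
    (hcstar : ∀ (α : Module.Dual ℝ L) (x : L) (β : Module.Dual ℝ L),
      β (cstar α x) = -((ω ⁅r α, r β⁆) x)) (α : Module.Dual ℝ L) (y : L) :
    cstar α y = p (r α) y := by
  refine (Function.LeftInverse.injective hr2) (LinearMap.ext fun w => ?_)
  have hw := hcstar α y (ω w)
  rw [hr2] at hw
  rw [hskew (cstar α y) w, hw, hp, hskew y]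

theorem dprod_eq (hc : ∀ α y, cstar α y = p (r α) y)
    (hco : ∀ x β, coad x β = ω (p x (r β))) (u v : L × Module.Dual ℝ L) :
    dprod p r cstar u v = (p (u.1 + r u.2) v.1, ω (p (u.1 + r u.2) (r v.2))) := by
  simp only [dprod, hc, hco, map_add, LinearMap.add_apply]
  exact Prod.ext rfl (add_comm _ _)

theorem dprod_mulAssociator (hr2 : ∀ x : L, r (ω x) = x)
    (hd : ∀ u v, dprod p r cstar u v = (p (u.1 + r u.2) v.1, ω (p (u.1 + r u.2) (r v.2))))
    (u v w : L × Module.Dual ℝ L) :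
    mulAssociator (dprod p r cstar) u v w =
      (mulAssociator (p · ·) (u.1 + r u.2) (v.1 + r v.2) w.1,
        ω (mulAssociator (p · ·) (u.1 + r u.2) (v.1 + r v.2) (r w.2))) := by
  have hσ : (dprod p r cstar u v).1 + r (dprod p r cstar u v).2 =
      p (u.1 + r u.2) (v.1 + r v.2) := by
    rw [hd, hr2, ← map_add]
  simp only [mulAssociator]
  rw [hd (dprod p r cstar u v), hσ, hd u, hd v, hr2, map_sub, Prod.mk_sub_mk]

theorem IsLeftSymmetric.dprod (hlsa : IsLeftSymmetric (p · ·)) (hr2 : ∀ x : L, r (ω x) = x)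
    (hd : ∀ u v, dprod p r cstar u v = (p (u.1 + r u.2) v.1, ω (p (u.1 + r u.2) (r v.2)))) :
    IsLeftSymmetric (dprod p r cstar) := by
  intro u v w
  rw [dprod_mulAssociator hr2 hd, dprod_mulAssociator hr2 hd, hlsa, hlsa (u.1 + r u.2)]

theorem dprod_sub_swap (hcomm : ∀ x y, p x y - p y x = ⁅x, y⁆)
    (hc : ∀ α y, cstar α y = p (r α) y) (hco : ∀ x β, coad x β = ω (p x (r β)))
    (u v : L × Module.Dual ℝ L) :
    dprod p r cstar u v - dprod p r cstar v u =
      (⁅u.1, v.1⁆ + cstar u.2 v.1 - cstar v.2 u.1,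
        ω ⁅r u.2, r v.2⁆ + coad u.1 v.2 - coad v.1 u.2) := by
  rw [dprod_eq hc hco, dprod_eq hc hco, ← hcomm u.1, ← hcomm (r u.2)]
  simp only [hc, hco, map_add, map_sub, LinearMap.add_apply, Prod.mk_sub_mk]
  congr 1 <;> abel

end DoubleProduct

theorem stmt12_general {L : Type*} [LieRing L] [LieAlgebra ℝ L]
    (ω : L →ₗ[ℝ] Module.Dual ℝ L)
    (hskew : ∀ x y : L, ω x y = - ω y x)
    (hclosed : ∀ x y z : L, ω ⁅x, y⁆ z + ω ⁅y, z⁆ x + ω ⁅z, x⁆ y = 0)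
    (r : Module.Dual ℝ L →ₗ[ℝ] L)
    (hr1 : ∀ α : Module.Dual ℝ L, ω (r α) = α)
    (hr2 : ∀ x : L, r (ω x) = x)
    (p : L →ₗ[ℝ] L →ₗ[ℝ] L)
    (hp : ∀ x y z : L, ω (p x y) z = -(ω y ⁅x, z⁆))
    (cstar : Module.Dual ℝ L → L → L)
    (hcstar : ∀ (α : Module.Dual ℝ L) (x : L) (β : Module.Dual ℝ L),
      β (cstar α x) = -((ω ⁅r α, r β⁆) x)) :
    (∀ u v w : L × Module.Dual ℝ L,
      dprod p r cstar (dprod p r cstar u v) w - dprod p r cstar u (dprod p r cstar v w)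
        = dprod p r cstar (dprod p r cstar v u) w
          - dprod p r cstar v (dprod p r cstar u w)) ∧
    (∀ u v : L × Module.Dual ℝ L,
      dprod p r cstar u v - dprod p r cstar v u
        = (⁅u.1, v.1⁆ + cstar u.2 v.1 - cstar v.2 u.1,
           ω ⁅r u.2, r v.2⁆ + coad u.1 v.2 - coad v.1 u.2)) := by
  have hω : Function.Injective ω := Function.LeftInverse.injective hr2
  have hcomm := symplecticProduct_sub_swap hω hskew hclosed hp
  have hlsa : IsLeftSymmetric (p · ·) :=
    isLeftSymmetric_of_sub_swap_eq_lie p hcomm (symplecticProduct_lie_apply hω hp)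
  have hc := cstar_eq hskew hr2 hp hcstar
  have hco := coad_eq hr1 hp
  exact ⟨hlsa.dprod hr2 (dprod_eq hc hco), dprod_sub_swap hcomm hc hco⟩

/-- for a symplectic Lie algebra `(𝔤, ω)`, the product
`(x,α)(y,β) = (xy + ad*_α y, αβ + ad*_x β)` on `𝒟 = 𝔤 × 𝔤*` is left symmetric and its
commutator is the double Lie bracket. -/
theorem stmt12 {L : Type*} [LieRing L] [LieAlgebra ℝ L] [FiniteDimensional ℝ L]
    (ω : L →ₗ[ℝ] Module.Dual ℝ L)
    (hskew : ∀ x y : L, ω x y = - ω y x)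
    (hclosed : ∀ x y z : L, ω ⁅x, y⁆ z + ω ⁅y, z⁆ x + ω ⁅z, x⁆ y = 0)
    (r : Module.Dual ℝ L →ₗ[ℝ] L)
    (hr1 : ∀ α : Module.Dual ℝ L, ω (r α) = α)
    (hr2 : ∀ x : L, r (ω x) = x)
    (p : L →ₗ[ℝ] L →ₗ[ℝ] L)
    (hp : ∀ x y z : L, ω (p x y) z = -(ω y ⁅x, z⁆))
    (cstar : Module.Dual ℝ L → L → L)
    (hcstar : ∀ (α : Module.Dual ℝ L) (x : L) (β : Module.Dual ℝ L),
      β (cstar α x) = -((ω ⁅r α, r β⁆) x)) :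
    (∀ u v w : L × Module.Dual ℝ L,
      dprod p r cstar (dprod p r cstar u v) w - dprod p r cstar u (dprod p r cstar v w)
        = dprod p r cstar (dprod p r cstar v u) w
          - dprod p r cstar v (dprod p r cstar u w)) ∧
    (∀ u v : L × Module.Dual ℝ L,
      dprod p r cstar u v - dprod p r cstar v u
        = (⁅u.1, v.1⁆ + cstar u.2 v.1 - cstar v.2 u.1,
           ω ⁅r u.2, r v.2⁆ + coad u.1 v.2 - coad v.1 u.2)) :=
  stmt12_general ω hskew hclosed r hr1 hr2 p hp cstar hcstar
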